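/- Let 0 < δ < 1/5, L ∈ ℕ and ω ∈ Γ(L,δ); write b₊ := T_b⁺(L) and b₋ := T_b⁻(L), and assume P_ω(τ(b₊) < τ(b₋)) ≥ 1/2. Then for every integer n ≥ exp(3δL) one has P_ω(τ(b₊) ≤ 2n/3, τ(b₊) < τ(b₋)) ≥ 1/2 − 6 · L⁴ · exp(−δL). -/

import Mathlib

open MeasureTheory ProbabilityTheory Filter Set Classical

noncomputable section

/-- An environment is a function assigning to each site `x : ℤ` the probability `ω x`
of jumping to the right. -/
abbrev Env := ℤ → ℝ

/-- `ρ_i = (1 - ω_i)/ω_i`. -/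
def rho (ω : Env) (i : ℤ) : ℝ := (1 - ω i) / ω i

/-- One-step transition probabilities of the RWRE in environment `ω`. -/
def step (ω : Env) (y z : ℤ) : ℝ :=
  if z = y + 1 then ω y else if z = y - 1 then 1 - ω y else 0

/-- `n`-step transition probabilities of a nearest-neighbour Markov chain on `ℤ`
with one-step transition probabilities `K`. -/
def probAux (K : ℤ → ℤ → ℝ) : ℕ → ℤ → ℤ → ℝ
  | 0, x, y => if y = x then 1 else 0
  | n + 1, x, y => probAux K n x (y - 1) * K (y - 1) y + probAux K n x (y + 1) * K (y + 1) y

/-- `prob ω n x y = P_ω^x(X_n = y)`, the quenched `n`-step transition probability. -/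
def prob (ω : Env) (n : ℕ) (x y : ℤ) : ℝ := probAux (step ω) n x y

/-- The potential `V`. -/
def V (ω : Env) (x : ℤ) : ℝ :=
  if 0 ≤ x then ∑ i ∈ Finset.range x.toNat, Real.log (rho ω (i + 1))
  else - ∑ i ∈ Finset.range (-x).toNat, Real.log (rho ω (-(i : ℤ)))

/-- `T⁺(L)` (as a natural number). -/
def Tplus (ω : Env) (L : ℕ) : ℕ :=
  sInf {n : ℕ | (L : ℝ) ≤ V ω n - sInf (V ω '' Set.Icc (0 : ℤ) n)}

def TplusZ (ω : Env) (L : ℕ) : ℤ := (Tplus ω L : ℤ)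

/-- `T⁻(L)` (an integer `≤ 0`). -/
def TminusAux (ω : Env) (L : ℕ) : ℕ :=
  sInf {n : ℕ | (L : ℝ) ≤ V ω (-(n : ℤ)) - sInf (V ω '' Set.Icc (-(n : ℤ)) 0)}

def TminusZ (ω : Env) (L : ℕ) : ℤ := -(TminusAux ω L : ℤ)

def R1plus (ω : Env) (L : ℕ) : ℝ := - sInf (V ω '' Set.Icc (0 : ℤ) (Tplus ω L : ℤ))

def R1minus (ω : Env) (L : ℕ) : ℝ := - sInf (V ω '' Set.Icc (TminusZ ω L) 0)

/-- `T_b⁺(L)` (as a natural number). -/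
def Tbplus (ω : Env) (L : ℕ) : ℕ := sInf {n : ℕ | V ω n = - R1plus ω L}

def TbplusZ (ω : Env) (L : ℕ) : ℤ := (Tbplus ω L : ℤ)

def TbminusAux (ω : Env) (L : ℕ) : ℕ := sInf {n : ℕ | V ω (-(n : ℤ)) = - R1minus ω L}

def TbminusZ (ω : Env) (L : ℕ) : ℤ := -(TbminusAux ω L : ℤ)

def R2plus (ω : Env) (L : ℕ) : ℝ := sSup (V ω '' Set.Icc (0 : ℤ) (TbplusZ ω L))

def R2minus (ω : Env) (L : ℕ) : ℝ := sSup (V ω '' Set.Icc (TbminusZ ω L) 0)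

/-- The set `Γ⁺(L,δ)` of environments. -/
def GammaPlus (L : ℕ) (δ : ℝ) : Set Env :=
  {ω | R1plus ω L ≤ δ * L ∧ R2plus ω L ≤ δ * L ∧ Tplus ω L ≤ L ^ 2}

/-- The set `Γ⁻(L,δ)` of environments. -/
def GammaMinus (L : ℕ) (δ : ℝ) : Set Env :=
  {ω | R1minus ω L ≤ δ * L ∧ R2minus ω L ≤ δ * L ∧ TminusAux ω L ≤ L ^ 2}

/-- The set `Γ(L,δ) = Γ⁺(L,δ) ∩ Γ⁻(L,δ)` of environments. -/
def Gamma (L : ℕ) (δ : ℝ) : Set Env := GammaPlus L δ ∩ GammaMinus L δ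

/-- The reversible measure `μ_ω(x) = e^{-V(x)} + e^{-V(x-1)}`. -/
def mu (ω : Env) (x : ℤ) : ℝ := Real.exp (-V ω x) + Real.exp (-V ω (x - 1))

/-- One-step transition probabilities of the walk reflected at `a` (below) and `b` (above). -/
def stepR (ω : Env) (a b : ℤ) (y z : ℤ) : ℝ :=
  if y = a then (if z = y + 1 then 1 else 0)
  else if y = b then (if z = y - 1 then 1 else 0)
  else step ω y z

/-- `n`-step transition probabilities of the reflected walk. -/
def probR (ω : Env) (a b : ℤ) (n : ℕ) (x y : ℤ) : ℝ := probAux (stepR ω a b) n x y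

/-- `μ` is the law of the Markov chain on `S` started at `x` with one-step transition
probabilities `K`, characterized by its values on cylinder sets. -/
def IsMarkovLaw {S : Type*} [MeasurableSpace S] (K : S → S → ℝ) (x : S)
    (μ : Measure (ℕ → S)) : Prop :=
  IsProbabilityMeasure μ ∧
    ∀ (n : ℕ) (p : ℕ → S),
      μ {X | ∀ i ≤ n, X i = p i} =
        (if p 0 = x then 1 else 0) *
          ∏ i ∈ Finset.range n, ENNReal.ofReal (K (p i) (p (i + 1)))

/-- `μ` is the quenched law `P_ω^x` of the RWRE, as a measure on path space. -/
def IsQuenchedLaw (ω : Env) (x : ℤ) (μ : Measure (ℕ → ℤ)) : Prop :=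
  IsMarkovLaw (step ω) x μ

/-- First hitting time `τ(x)` of a path, with value `⊤` if `x` is never visited. -/
def hit (x : ℤ) (X : ℕ → ℤ) : ℕ∞ := sInf ((↑) '' {n : ℕ | X n = x})

/-- The standing assumptions on the law `𝐏` of the environment, with ellipticity
constant `ε`: `𝐏` is a probability measure, the coordinates `(ω_x)_{x ∈ ℤ}` are i.i.d.,
`0 < ε < 1/2` and `𝐏(ε ≤ ω_0 ≤ 1 - ε) = 1`, `𝐄[log ρ_0] = 0`, and `Var(log ρ_0) > 0`. -/
def Standing (P : Measure Env) (ε : ℝ) : Prop :=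
  IsProbabilityMeasure P ∧
    iIndepFun (fun x ω => ω x) P ∧
    (∀ x : ℤ, P.map (fun ω => ω x) = P.map (fun ω => ω 0)) ∧
    0 < ε ∧ ε < 1 / 2 ∧
    (∀ᵐ ω ∂P, ε ≤ ω 0 ∧ ω 0 ≤ 1 - ε) ∧
    (∫ ω, Real.log (rho ω 0) ∂P) = 0 ∧
    0 < variance (fun ω => Real.log (rho ω 0)) P


/-!
If `b₊` is hit before `b₋` but only after time `2n/3`, the walk stays strictly between `b₋` and
`b₊` during the first `N + 1` steps, `N = ⌊2n/3⌋`. The mean exit time `f` of that interval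
solves `f = 1 + P_ω f` inside it, so `f(X_k) + k`, stopped on exit, is a supermartingale and
`(N + 1) · P_ω(no exit up to time N) ≤ f(0)`. On `Γ(L,δ)` the potential stays in `[-δL, δL]`
on `[b₋, b₊]`, an interval of length at most `2L²`, and the explicit formula for `f` gives
`f(0) ≤ 4 L⁴ e^{2δL}`; since `N + 1 ≥ 2 e^{3δL} / 3`, the late event has probability at most
`6 L⁴ e^{-δL}`.
-/

open scoped ENNReal

section MarkovChain

variable {S : Type*}

def pathWeight (K : S → S → ℝ) (x : S) {N : ℕ} (q : Fin (N + 1) → S) : ℝ≥0∞ :=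
  (if q 0 = x then 1 else 0) * ∏ i : Fin N, ENNReal.ofReal (K (q i.castSucc) (q i.succ))

def killedPathWeight (K : S → S → ℝ) (U : Set S) (x : S) {N : ℕ} (q : Fin (N + 1) → S) :
    ℝ≥0∞ :=
  (Set.univ.pi fun _ => U).indicator (pathWeight K x) q

lemma pathWeight_snoc (K : S → S → ℝ) (x : S) {N : ℕ} (q : Fin (N + 1) → S) (z : S) :
    pathWeight K x (Fin.snoc q z : Fin (N + 2) → S) =
      pathWeight K x q * ENNReal.ofReal (K (q (Fin.last N)) z) := by
  simp only [pathWeight, Fin.prod_univ_castSucc, Fin.succ_castSucc, Fin.snoc_castSucc,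
    Fin.succ_last, Fin.snoc_last, ← Fin.castSucc_zero, mul_assoc]

lemma killedPathWeight_snoc_le (K : S → S → ℝ) (U : Set S) (x : S) {N : ℕ}
    (q : Fin (N + 1) → S) (z : S) :
    killedPathWeight K U x (Fin.snoc q z : Fin (N + 2) → S) ≤
      killedPathWeight K U x q * ENNReal.ofReal (K (q (Fin.last N)) z) := by
  by_cases hq : q ∈ Set.univ.pi fun _ => U
  · unfold killedPathWeight
    rw [Set.indicator_of_mem hq, ← pathWeight_snoc]
    exact Set.indicator_le_self _ _ _
  · refine le_of_eq_of_le (Set.indicator_of_notMem (fun h => hq ?_) _) zero_le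
    intro i _
    simpa using h (Fin.castSucc i) trivial

lemma killedPathWeight_le_pathWeight (K : S → S → ℝ) (U : Set S) (x : S) {N : ℕ}
    (q : Fin (N + 1) → S) : killedPathWeight K U x q ≤ pathWeight K x q :=
  Set.indicator_le_self _ _ _

lemma mem_of_killedPathWeight_ne_zero {K : S → S → ℝ} {U : Set S} {x : S} {N : ℕ}
    {q : Fin (N + 1) → S} (hq : killedPathWeight K U x q ≠ 0) (i : Fin (N + 1)) : q i ∈ U :=
  Set.mem_of_indicator_ne_zero hq i trivial

lemma IsMarkovLaw.measure_cylinder [MeasurableSpace S] {K : S → S → ℝ} {x : S}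
    {μ : Measure (ℕ → S)} (hμ : IsMarkovLaw K x μ) {N : ℕ} (q : Fin (N + 1) → S) :
    μ {X | ∀ i : Fin (N + 1), X i = q i} = pathWeight K x q := by
  let p : ℕ → S := fun i => if h : i < N + 1 then q ⟨i, h⟩ else q 0
  have hcyl : {X : ℕ → S | ∀ i : Fin (N + 1), X i = q i} = {X | ∀ i ≤ N, X i = p i} := by
    ext X
    simp only [Set.mem_ofPred_eq, p]
    refine ⟨fun h i hi => ?_, fun h i => ?_⟩
    · rw [dif_pos (Nat.lt_succ_of_le hi)]; exact h ⟨i, _⟩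
    · rw [h i (Nat.le_of_lt_succ i.isLt), dif_pos i.isLt]
  rw [hcyl, hμ.2 N p, pathWeight, ← Fin.prod_univ_eq_prod_range]
  simp [p]
  rfl

variable {K : S → S → ℝ} {U : Set S} {F : S → ℝ≥0∞}

def IsExitTimeSupersolution (K : S → S → ℝ) (U : Set S) (F : S → ℝ≥0∞) : Prop :=
  ∀ w ∈ U, ∑' z, ENNReal.ofReal (K w z) ≤ 1 ∧ 1 + ∑' z, ENNReal.ofReal (K w z) * F z ≤ F w

lemma IsExitTimeSupersolution.one_le (hF : IsExitTimeSupersolution K U F) {w : S} (hw : w ∈ U) :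
    1 ≤ F w :=
  le_self_add.trans (hF w hw).2

lemma IsExitTimeSupersolution.tsum_mul_add_le (hF : IsExitTimeSupersolution K U F) {w : S}
    (hw : w ∈ U) (c : ℝ≥0∞) : ∑' z, ENNReal.ofReal (K w z) * (F z + (c + 1)) ≤ F w + c := by
  obtain ⟨hsub, hsuper⟩ := hF w hw
  calc ∑' z, ENNReal.ofReal (K w z) * (F z + (c + 1))
      = ∑' z, ENNReal.ofReal (K w z) * F z + (∑' z, ENNReal.ofReal (K w z)) * (c + 1) := by
        simp only [mul_add, ENNReal.tsum_add, ENNReal.tsum_mul_right]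
    _ ≤ ∑' z, ENNReal.ofReal (K w z) * F z + 1 * (c + 1) := by gcongr
    _ = (1 + ∑' z, ENNReal.ofReal (K w z) * F z) + c := by ring
    _ ≤ F w + c := by gcongr

/-- `F(X_n) + n`, stopped on leaving `U`, is a supermartingale. -/
lemma IsExitTimeSupersolution.tsum_killedPathWeight_le (hF : IsExitTimeSupersolution K U F)
    (x : S) : ∀ N : ℕ,
      ∑' q : Fin (N + 1) → S, killedPathWeight K U x q * (F (q (Fin.last N)) + N) ≤ F x
  | 0 => by
    rw [← (Equiv.funUnique (Fin 1) S).symm.tsum_eq]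
    refine (ENNReal.tsum_le_tsum fun s => ?_).trans (tsum_ite_eq x F).le
    by_cases hs : s = x
    · subst hs
      calc _ ≤ pathWeight K s ((Equiv.funUnique (Fin 1) S).symm s) * F s := by
            simpa using mul_le_mul_left (killedPathWeight_le_pathWeight K U s _) _
        _ = _ := by simp [pathWeight]
    · simp [killedPathWeight, Set.indicator, pathWeight, hs]
  | N + 1 => by
    have hstep (q : Fin (N + 1) → S) :
        killedPathWeight K U x q * ∑' z, ENNReal.ofReal (K (q (Fin.last N)) z) * (F z + (N + 1))
          ≤ killedPathWeight K U x q * (F (q (Fin.last N)) + N) := by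
      by_cases hq : killedPathWeight K U x q = 0
      · simp [hq]
      · exact mul_le_mul_right
          (hF.tsum_mul_add_le (mem_of_killedPathWeight_ne_zero hq _) _) _
    calc _ = ∑' q : Fin (N + 1) → S, ∑' z : S,
            killedPathWeight K U x (Fin.snoc q z : Fin (N + 2) → S) * (F z + (N + 1)) := by
          rw [← (Fin.snocEquiv fun _ => S).tsum_eq, ENNReal.tsum_prod', ENNReal.tsum_comm]
          simp only [Fin.snocEquiv_apply, Fin.snoc_last, Nat.cast_succ]
          rfl
      _ ≤ ∑' q : Fin (N + 1) → S, killedPathWeight K U x q *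
            ∑' z, ENNReal.ofReal (K (q (Fin.last N)) z) * (F z + (N + 1)) := by
          refine ENNReal.tsum_le_tsum fun q => ?_
          rw [← ENNReal.tsum_mul_left]
          refine ENNReal.tsum_le_tsum fun z => ?_
          rw [← mul_assoc]
          gcongr
          exact killedPathWeight_snoc_le K U x q z
      _ ≤ _ := (ENNReal.tsum_le_tsum hstep).trans (hF.tsum_killedPathWeight_le x N)

theorem IsMarkovLaw.mul_measure_forall_mem_le [MeasurableSpace S] [Countable S] {x : S}
    {μ : Measure (ℕ → S)} (hμ : IsMarkovLaw K x μ) (hF : IsExitTimeSupersolution K U F)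
    (N : ℕ) : (N + 1) * μ {X | ∀ i ≤ N, X i ∈ U} ≤ F x := by
  have hcover : {X : ℕ → S | ∀ i ≤ N, X i ∈ U} ⊆
      ⋃ q ∈ Set.univ.pi fun _ : Fin (N + 1) => U, {X | ∀ i : Fin (N + 1), X i = q i} :=
    fun X hX => Set.mem_biUnion (x := fun i : Fin (N + 1) => X i)
      (fun i _ => hX i (Nat.le_of_lt_succ i.isLt)) fun _ => rfl
  have hμU : μ {X | ∀ i ≤ N, X i ∈ U} ≤ ∑' q : Fin (N + 1) → S, killedPathWeight K U x q := by
    refine (measure_mono hcover).trans ((measure_biUnion_le μ (Set.to_countable _) _).trans ?_)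
    simp only [hμ.measure_cylinder]
    exact (tsum_subtype _ _).le
  have hterm (q : Fin (N + 1) → S) :
      killedPathWeight K U x q * (N + 1) ≤ killedPathWeight K U x q * (F (q (Fin.last N)) + N) := by
    by_cases hq : killedPathWeight K U x q = 0
    · simp [hq]
    · rw [add_comm (F _)]
      gcongr
      exact hF.one_le (mem_of_killedPathWeight_ne_zero hq _)
  calc (N + 1) * μ {X | ∀ i ≤ N, X i ∈ U}
      ≤ ∑' q : Fin (N + 1) → S, killedPathWeight K U x q * (N + 1) := by
        rw [ENNReal.tsum_mul_right, mul_comm]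
        gcongr
    _ ≤ F x := (ENNReal.tsum_le_tsum hterm).trans (hF.tsum_killedPathWeight_le x N)

end MarkovChain

lemma V_sub_V_sub_one (ω : Env) (x : ℤ) : V ω x - V ω (x - 1) = Real.log (rho ω x) := by
  rcases le_or_gt 1 x with hx | hx
  · rw [V, V, if_pos (by omega), if_pos (by omega), show x.toNat = (x - 1).toNat + 1 by omega,
      Finset.sum_range_succ, show ((x - 1).toNat : ℤ) + 1 = x by omega]
    ring
  · have hVx : V ω x = -∑ i ∈ Finset.range (-x).toNat, Real.log (rho ω (-(i : ℤ))) := by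
      rcases (show x ≤ 0 by omega).lt_or_eq with h | rfl
      · rw [V, if_neg (by omega)]
      · simp [V]
    rw [hVx, V, if_neg (by omega), show (-(x - 1)).toNat = (-x).toNat + 1 by omega,
      Finset.sum_range_succ, show -(((-x).toNat : ℕ) : ℤ) = x by omega]
    ring

lemma exp_V_sub_V_sub_one {ω : Env} {x : ℤ} (hω : 0 < ω x ∧ ω x < 1) :
    Real.exp (V ω x - V ω (x - 1)) = rho ω x :=
  (V_sub_V_sub_one ω x) ▸ Real.exp_log (div_pos (by linarith) hω.1)

section MeanExitTime

variable (ω : Env) (a b : ℤ)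

def meanExitTimeDecrement (j : ℤ) : ℝ :=
  ∑ i ∈ Finset.Icc (a + 1) j, (Real.exp (V ω j - V ω i) + Real.exp (V ω j - V ω (i - 1)))

/-- The classical formula for `E_ω^x[τ(a) ∧ τ(b)]`, `a ≤ x ≤ b`. -/
def meanExitTime (x : ℤ) : ℝ :=
  ∑ j ∈ Finset.Icc x (b - 1), meanExitTimeDecrement ω a j

variable {ω a b}

lemma meanExitTimeDecrement_nonneg (j : ℤ) : 0 ≤ meanExitTimeDecrement ω a j :=
  Finset.sum_nonneg fun _ _ => by positivity

lemma meanExitTime_nonneg (x : ℤ) : 0 ≤ meanExitTime ω a b x :=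
  Finset.sum_nonneg fun _ _ => meanExitTimeDecrement_nonneg _

lemma meanExitTimeDecrement_eq {x : ℤ} (hω : 0 < ω x ∧ ω x < 1) (hax : a < x) :
    meanExitTimeDecrement ω a x =
      rho ω x * meanExitTimeDecrement ω a (x - 1) + (1 + rho ω x) := by
  have hIcc : Finset.Icc (a + 1) x = insert x (Finset.Icc (a + 1) (x - 1)) := by
    ext; simp only [Finset.mem_Icc, Finset.mem_insert]; omega
  rw [meanExitTimeDecrement, hIcc, Finset.sum_insert (by simp), sub_self, Real.exp_zero,
    exp_V_sub_V_sub_one hω, meanExitTimeDecrement, Finset.mul_sum, ← exp_V_sub_V_sub_one hω]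
  simp only [mul_add, ← Real.exp_add, sub_add_sub_cancel]
  ring

lemma meanExitTime_eq_add {x : ℤ} (hxb : x < b) :
    meanExitTime ω a b x = meanExitTimeDecrement ω a x + meanExitTime ω a b (x + 1) := by
  have hIcc : Finset.Icc x (b - 1) = insert x (Finset.Icc (x + 1) (b - 1)) := by
    ext; simp only [Finset.mem_Icc, Finset.mem_insert]; omega
  rw [meanExitTime, hIcc, Finset.sum_insert (by simp), meanExitTime]

lemma meanExitTime_poisson {x : ℤ} (hω : 0 < ω x ∧ ω x < 1) (hax : a < x) (hxb : x < b) :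
    1 + ω x * meanExitTime ω a b (x + 1) + (1 - ω x) * meanExitTime ω a b (x - 1) =
      meanExitTime ω a b x := by
  have hx := meanExitTime_eq_add (ω := ω) (a := a) hxb
  have hx1 := meanExitTime_eq_add (ω := ω) (a := a) (show x - 1 < b by omega)
  rw [sub_add_cancel] at hx1
  have hdec : ω x * meanExitTimeDecrement ω a x - (1 - ω x) * meanExitTimeDecrement ω a (x - 1)
      = 1 := by
    rw [meanExitTimeDecrement_eq hω hax, rho]
    field_simp [hω.1.ne']
    ring
  linear_combination (-(ω x)) * hx + (1 - ω x) * hx1 - hdec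

lemma meanExitTimeDecrement_le {h : ℝ} (hV : ∀ y ∈ Set.Icc a b, |V ω y| ≤ h) {j : ℤ}
    (haj : a ≤ j) (hjb : j ≤ b) :
    meanExitTimeDecrement ω a j ≤ (b - a : ℤ) * (2 * Real.exp (2 * h)) := by
  have hterm : ∀ i ∈ Finset.Icc (a + 1) j,
      Real.exp (V ω j - V ω i) + Real.exp (V ω j - V ω (i - 1)) ≤ 2 * Real.exp (2 * h) := by
    intro i hi
    rw [Finset.mem_Icc] at hi
    have hVj := abs_le.mp (hV j ⟨by omega, hjb⟩)
    have hVi := abs_le.mp (hV i ⟨by omega, by omega⟩)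
    have hVi' := abs_le.mp (hV (i - 1) ⟨by omega, by omega⟩)
    have h1 : Real.exp (V ω j - V ω i) ≤ Real.exp (2 * h) := Real.exp_le_exp.mpr (by linarith)
    have h2 : Real.exp (V ω j - V ω (i - 1)) ≤ Real.exp (2 * h) :=
      Real.exp_le_exp.mpr (by linarith)
    linarith
  have hcard : ((Finset.Icc (a + 1) j).card : ℤ) ≤ b - a := by rw [Int.card_Icc]; omega
  calc meanExitTimeDecrement ω a j ≤ (Finset.Icc (a + 1) j).card * (2 * Real.exp (2 * h)) :=
        (Finset.sum_le_card_nsmul _ _ _ hterm).trans_eq (nsmul_eq_mul _ _)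
    _ ≤ (b - a : ℤ) * (2 * Real.exp (2 * h)) := by gcongr; exact_mod_cast hcard

lemma meanExitTime_le {h : ℝ} (hV : ∀ y ∈ Set.Icc a b, |V ω y| ≤ h) {x : ℤ} (hax : a ≤ x)
    (hxb : x ≤ b) :
    meanExitTime ω a b x ≤ (b - x : ℤ) * ((b - a : ℤ) * (2 * Real.exp (2 * h))) := by
  have hcard : ((Finset.Icc x (b - 1)).card : ℤ) ≤ b - x := by rw [Int.card_Icc]; omega
  have hba : (0 : ℝ) ≤ (b - a : ℤ) := by exact_mod_cast (show 0 ≤ b - a by omega)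
  calc meanExitTime ω a b x
      ≤ (Finset.Icc x (b - 1)).card * ((b - a : ℤ) * (2 * Real.exp (2 * h))) := by
        refine (Finset.sum_le_card_nsmul _ _ _ fun j hj => ?_).trans_eq (nsmul_eq_mul _ _)
        rw [Finset.mem_Icc] at hj
        exact meanExitTimeDecrement_le hV (by omega) (by omega)
    _ ≤ (b - x : ℤ) * ((b - a : ℤ) * (2 * Real.exp (2 * h))) := by
        gcongr; exact_mod_cast hcard

end MeanExitTime

lemma tsum_ofReal_step_mul (ω : Env) (w : ℤ) (g : ℤ → ℝ≥0∞) :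
    ∑' z, ENNReal.ofReal (step ω w z) * g z =
      ENNReal.ofReal (ω w) * g (w + 1) + ENNReal.ofReal (1 - ω w) * g (w - 1) := by
  rw [tsum_eq_sum (s := {w + 1, w - 1}) fun z hz => ?_, Finset.sum_pair (by omega)]
  · simp [step, show w - 1 ≠ w + 1 by omega]
  · simp only [Finset.mem_insert, Finset.mem_singleton, not_or] at hz
    simp [step, hz.1, hz.2]

/-- The value `⊤` off `[a, b]` makes the supersolution inequality trivial there, so no continuity
of the paths is needed to confine the walk to `[a, b]`. -/
lemma isExitTimeSupersolution_meanExitTime {ω : Env} (hω : ∀ x, 0 < ω x ∧ ω x < 1) (a b : ℤ) :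
    IsExitTimeSupersolution (step ω) {a, b}ᶜ
      fun w => if w ∈ Set.Icc a b then ENNReal.ofReal (meanExitTime ω a b w) else ⊤ := by
  intro w hw
  simp only [Set.mem_compl_iff, Set.mem_insert_iff, Set.mem_singleton_iff, not_or] at hw
  have hω0 := (hω w).1.le
  have hω1 : 0 ≤ 1 - ω w := by linarith [(hω w).2]
  constructor
  · simpa [← ENNReal.ofReal_add hω0 hω1] using (tsum_ofReal_step_mul ω w 1).le
  · by_cases hmem : w ∈ Set.Icc a b
    · have haw : a < w := lt_of_le_of_ne hmem.1 (Ne.symm hw.1)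
      have hwb : w < b := lt_of_le_of_ne hmem.2 hw.2
      beta_reduce
      rw [tsum_ofReal_step_mul, if_pos ⟨by omega, by omega⟩, if_pos ⟨by omega, by omega⟩,
        if_pos hmem, ← meanExitTime_poisson (hω w) haw hwb, ENNReal.ofReal_add
          (add_nonneg zero_le_one (mul_nonneg hω0 (meanExitTime_nonneg _))),
        ENNReal.ofReal_add zero_le_one, ENNReal.ofReal_one, ENNReal.ofReal_mul hω0,
        ENNReal.ofReal_mul hω1, add_assoc]
      · exact mul_nonneg hω0 (meanExitTime_nonneg _)
      · exact mul_nonneg hω1 (meanExitTime_nonneg _)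
    · simp [hmem]

theorem IsQuenchedLaw.mul_measure_forall_ne_le {ω : Env} (hω : ∀ x, 0 < ω x ∧ ω x < 1)
    {x a b : ℤ} {μ : Measure (ℕ → ℤ)} (hμ : IsQuenchedLaw ω x μ) (hx : x ∈ Set.Icc a b) (N : ℕ) :
    (N + 1) * μ {X | ∀ i ≤ N, X i ≠ a ∧ X i ≠ b} ≤ ENNReal.ofReal (meanExitTime ω a b x) := by
  simpa [hx] using
    IsMarkovLaw.mul_measure_forall_mem_le hμ (isExitTimeSupersolution_meanExitTime hω a b) N

lemma Tbplus_le_Tplus (ω : Env) (L : ℕ) : Tbplus ω L ≤ Tplus ω L := by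
  obtain ⟨k, hk, hVk⟩ :=
    (Set.Nonempty.image (V ω) (Set.nonempty_Icc.mpr (Int.natCast_nonneg _))).csInf_mem
      ((Set.finite_Icc (0 : ℤ) (Tplus ω L)).image (V ω))
  have hmin : k.toNat ∈ {n : ℕ | V ω n = -R1plus ω L} := by
    simp [R1plus, Int.toNat_of_nonneg hk.1, hVk]
  have := Nat.sInf_le hmin
  rw [Set.mem_Icc] at hk
  rw [Tbplus]
  omega

lemma TbminusAux_le_TminusAux (ω : Env) (L : ℕ) : TbminusAux ω L ≤ TminusAux ω L := by
  obtain ⟨k, hk, hVk⟩ := (Set.Nonempty.image (V ω) (Set.nonempty_Icc.mpr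
    (neg_nonpos.mpr (Int.natCast_nonneg (TminusAux ω L))))).csInf_mem
    ((Set.finite_Icc (TminusZ ω L) 0).image (V ω))
  have hmin : (-k).toNat ∈ {n : ℕ | V ω (-(n : ℤ)) = -R1minus ω L} := by
    simp [R1minus, TminusZ, Int.toNat_of_nonneg (neg_nonneg.mpr hk.2), hVk]
  have := Nat.sInf_le hmin
  rw [Set.mem_Icc] at hk
  rw [TbminusAux]
  omega

section Gamma
variable {ω : Env} {L : ℕ} {δ : ℝ}

lemma abs_V_le_of_mem_GammaPlus (hΓ : ω ∈ GammaPlus L δ) {x : ℤ}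
    (hx : x ∈ Set.Icc 0 (TbplusZ ω L)) : |V ω x| ≤ δ * L := by
  obtain ⟨hR1, hR2, -⟩ := hΓ
  have hTb : TbplusZ ω L ≤ Tplus ω L := Int.ofNat_le.mpr (Tbplus_le_Tplus ω L)
  have hlow : -R1plus ω L ≤ V ω x := by
    rw [R1plus, neg_neg]
    exact csInf_le ((Set.finite_Icc _ _).image _).bddBelow ⟨x, ⟨hx.1, hx.2.trans hTb⟩, rfl⟩
  have hup : V ω x ≤ R2plus ω L := le_csSup ((Set.finite_Icc _ _).image _).bddAbove ⟨x, hx, rfl⟩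
  exact abs_le.mpr ⟨by linarith, by linarith⟩

lemma abs_V_le_of_mem_GammaMinus (hΓ : ω ∈ GammaMinus L δ) {x : ℤ}
    (hx : x ∈ Set.Icc (TbminusZ ω L) 0) : |V ω x| ≤ δ * L := by
  obtain ⟨hR1, hR2, -⟩ := hΓ
  have hTb : TminusZ ω L ≤ TbminusZ ω L :=
    neg_le_neg (Int.ofNat_le.mpr (TbminusAux_le_TminusAux ω L))
  have hlow : -R1minus ω L ≤ V ω x := by
    rw [R1minus, neg_neg]
    exact csInf_le ((Set.finite_Icc _ _).image _).bddBelow ⟨x, ⟨hTb.trans hx.1, hx.2⟩, rfl⟩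
  have hup : V ω x ≤ R2minus ω L := le_csSup ((Set.finite_Icc _ _).image _).bddAbove ⟨x, hx, rfl⟩
  exact abs_le.mpr ⟨by linarith, by linarith⟩

lemma abs_V_le_of_mem_Gamma (hΓ : ω ∈ Gamma L δ) {x : ℤ}
    (hx : x ∈ Set.Icc (TbminusZ ω L) (TbplusZ ω L)) : |V ω x| ≤ δ * L := by
  rcases le_total x 0 with h | h
  · exact abs_V_le_of_mem_GammaMinus hΓ.2 ⟨hx.1, h⟩
  · exact abs_V_le_of_mem_GammaPlus hΓ.1 ⟨h, hx.2⟩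

lemma TbplusZ_le_sq (hΓ : ω ∈ GammaPlus L δ) : TbplusZ ω L ≤ L ^ 2 := by
  rw [TbplusZ]
  exact_mod_cast (Tbplus_le_Tplus ω L).trans hΓ.2.2

lemma neg_sq_le_TbminusZ (hΓ : ω ∈ GammaMinus L δ) : -(L ^ 2 : ℤ) ≤ TbminusZ ω L :=
  neg_le_neg (by exact_mod_cast (TbminusAux_le_TminusAux ω L).trans hΓ.2.2)

lemma meanExitTime_le_of_mem_Gamma (hΓ : ω ∈ Gamma L δ) :
    meanExitTime ω (TbminusZ ω L) (TbplusZ ω L) 0 ≤ 4 * L ^ 4 * Real.exp (2 * (δ * L)) := by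
  have hbp : (TbplusZ ω L : ℝ) ≤ L ^ 2 := by exact_mod_cast TbplusZ_le_sq hΓ.1
  have hbm : -(L : ℝ) ^ 2 ≤ TbminusZ ω L := by exact_mod_cast neg_sq_le_TbminusZ hΓ.2
  have hbp0 : 0 ≤ TbplusZ ω L := Int.natCast_nonneg _
  have hbm0 : TbminusZ ω L ≤ 0 := neg_nonpos.mpr (Int.natCast_nonneg _)
  have hbp0' : (0 : ℝ) ≤ TbplusZ ω L := by exact_mod_cast hbp0
  have hbm0' : (TbminusZ ω L : ℝ) ≤ 0 := by exact_mod_cast hbm0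
  refine (meanExitTime_le (fun y hy => abs_V_le_of_mem_Gamma hΓ hy) hbm0 hbp0).trans ?_
  push_cast
  calc ((TbplusZ ω L : ℝ) - 0) * ((TbplusZ ω L - TbminusZ ω L) * (2 * Real.exp (2 * (δ * L))))
      ≤ L ^ 2 * ((L ^ 2 + L ^ 2) * (2 * Real.exp (2 * (δ * L)))) := by
        gcongr
        · exact mul_nonneg (by linarith) (by positivity)
        · linarith
        · linarith
    _ = 4 * L ^ 4 * Real.exp (2 * (δ * L)) := by ring

end Gamma

lemma ne_of_lt_hit {x : ℤ} {X : ℕ → ℤ} {i : ℕ} (h : (i : ℕ∞) < hit x X) : X i ≠ x :=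
  fun hXi => (sInf_le ⟨i, hXi, rfl⟩ : hit x X ≤ i).not_gt h

lemma natCast_div_lt_of_not_mul_le {h : ℕ∞} {n : ℕ} (H : ¬3 * h ≤ 2 * (n : ℕ∞)) :
    ((2 * n / 3 : ℕ) : ℕ∞) < h := by
  induction h using ENat.recTopCoe with
  | top => exact ENat.natCast_lt_top _
  | coe k => norm_cast at H ⊢; omega

lemma four_mul_pow_four_mul_exp_le {δ : ℝ} {L n : ℕ} (hn : Real.exp (3 * δ * L) ≤ n) :
    4 * (L : ℝ) ^ 4 * Real.exp (2 * (δ * L)) ≤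
      ((2 * n / 3 : ℕ) + 1 : ℝ) * (6 * L ^ 4 * Real.exp (-δ * L)) := by
  have hN : (2 * n : ℝ) ≤ 3 * ((2 * n / 3 : ℕ) + 1) := by
    exact_mod_cast (show 2 * n ≤ 3 * (2 * n / 3 + 1) by omega)
  calc 4 * (L : ℝ) ^ 4 * Real.exp (2 * (δ * L))
      = 4 * L ^ 4 * Real.exp (-δ * L) * Real.exp (3 * δ * L) := by
        rw [mul_assoc _ (Real.exp _), ← Real.exp_add]; ring_nf
    _ ≤ 4 * L ^ 4 * Real.exp (-δ * L) * n := by gcongr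
    _ = 2 * n / 3 * (6 * L ^ 4 * Real.exp (-δ * L)) := by ring
    _ ≤ ((2 * n / 3 : ℕ) + 1 : ℝ) * (6 * L ^ 4 * Real.exp (-δ * L)) := by
        gcongr; linarith

lemma measure_late_hit_le {δ : ℝ} {L : ℕ} {ω : Env} (hω : ∀ x : ℤ, 0 < ω x ∧ ω x < 1)
    (hΓ : ω ∈ Gamma L δ) {μ : Measure (ℕ → ℤ)} (hμ : IsQuenchedLaw ω 0 μ) {n : ℕ}
    (hn : Real.exp (3 * δ * L) ≤ n) :
    μ {X | hit (TbplusZ ω L) X < hit (TbminusZ ω L) X ∧ ¬3 * hit (TbplusZ ω L) X ≤ 2 * (n : ℕ∞)}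
      ≤ ENNReal.ofReal (6 * L ^ 4 * Real.exp (-δ * L)) := by
  set N := 2 * n / 3
  have hlate : {X | hit (TbplusZ ω L) X < hit (TbminusZ ω L) X ∧
      ¬3 * hit (TbplusZ ω L) X ≤ 2 * (n : ℕ∞)} ⊆
      {X | ∀ i ≤ N, X i ≠ TbminusZ ω L ∧ X i ≠ TbplusZ ω L} := by
    rintro X ⟨hbm, hbp⟩ i hi
    have hi' : (i : ℕ∞) < hit (TbplusZ ω L) X :=
      lt_of_le_of_lt (by exact_mod_cast hi) (natCast_div_lt_of_not_mul_le hbp)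
    exact ⟨ne_of_lt_hit (hi'.trans hbm), ne_of_lt_hit hi'⟩
  have h0 : (0 : ℤ) ∈ Set.Icc (TbminusZ ω L) (TbplusZ ω L) :=
    ⟨neg_nonpos.mpr (Int.natCast_nonneg _), Int.natCast_nonneg _⟩
  refine (ENNReal.mul_le_mul_iff_right (by positivity) (ENNReal.natCast_ne_top (N + 1))).mp ?_
  calc ((N + 1 : ℕ) : ℝ≥0∞) * μ _
      ≤ (N + 1) * μ {X | ∀ i ≤ N, X i ≠ TbminusZ ω L ∧ X i ≠ TbplusZ ω L} := by
        push_cast; gcongr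
    _ ≤ ENNReal.ofReal (meanExitTime ω (TbminusZ ω L) (TbplusZ ω L) 0) :=
        hμ.mul_measure_forall_ne_le hω h0 N
    _ ≤ ENNReal.ofReal ((N + 1 : ℕ) * (6 * L ^ 4 * Real.exp (-δ * L))) := by
        gcongr
        push_cast
        exact (meanExitTime_le_of_mem_Gamma hΓ).trans (four_mul_pow_four_mul_exp_le hn)
    _ = ((N + 1 : ℕ) : ℝ≥0∞) * ENNReal.ofReal (6 * L ^ 4 * Real.exp (-δ * L)) := by
        rw [ENNReal.ofReal_mul (Nat.cast_nonneg _), ENNReal.ofReal_natCast]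

theorem hitting_time_estimate_general (δ : ℝ) (L : ℕ)
    (ω : Env) (hω : ∀ x : ℤ, 0 < ω x ∧ ω x < 1) (hΓ : ω ∈ Gamma L δ)
    (μ : Measure (ℕ → ℤ)) (hμ : IsQuenchedLaw ω 0 μ)
    (hhalf : 1 / 2 ≤ μ {X | hit (TbplusZ ω L) X < hit (TbminusZ ω L) X}) :
    ∀ n : ℕ, Real.exp (3 * δ * L) ≤ n →
      ENNReal.ofReal (1 / 2 - 6 * (L : ℝ) ^ 4 * Real.exp (-δ * L)) ≤
        μ {X | 3 * hit (TbplusZ ω L) X ≤ 2 * (n : ℕ∞) ∧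
          hit (TbplusZ ω L) X < hit (TbminusZ ω L) X} := by
  intro n hn
  have hsplit : {X | hit (TbplusZ ω L) X < hit (TbminusZ ω L) X} ⊆
      {X | 3 * hit (TbplusZ ω L) X ≤ 2 * (n : ℕ∞) ∧
        hit (TbplusZ ω L) X < hit (TbminusZ ω L) X} ∪
      {X | hit (TbplusZ ω L) X < hit (TbminusZ ω L) X ∧
        ¬3 * hit (TbplusZ ω L) X ≤ 2 * (n : ℕ∞)} := by
    intro X hX
    by_cases h : 3 * hit (TbplusZ ω L) X ≤ 2 * (n : ℕ∞)
    exacts [Or.inl ⟨h, hX⟩, Or.inr ⟨hX, h⟩]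
  rw [ENNReal.ofReal_sub _ (by positivity), tsub_le_iff_right]
  calc ENNReal.ofReal (1 / 2) ≤ μ {X | hit (TbplusZ ω L) X < hit (TbminusZ ω L) X} := by
        simpa using hhalf
    _ ≤ _ := (measure_mono hsplit).trans (measure_union_le _ _)
    _ ≤ _ := by gcongr; exact measure_late_hit_le hω hΓ hμ hn

/-- **Estimate (5.5).** For `0 < δ < 1/5`, `ω ∈ Γ(L,δ)` with
`P_ω(τ(b₊) < τ(b₋)) ≥ 1/2`, and every `n ≥ exp(3δL)`:
`P_ω(τ(b₊) ≤ 2n/3, τ(b₊) < τ(b₋)) ≥ 1/2 - 6 L⁴ exp(-δL)`. -/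
theorem hitting_time_estimate (δ : ℝ) (hδ0 : 0 < δ) (hδ1 : δ < 1 / 5) (L : ℕ)
    (ω : Env) (hω : ∀ x : ℤ, 0 < ω x ∧ ω x < 1) (hΓ : ω ∈ Gamma L δ)
    (μ : Measure (ℕ → ℤ)) (hμ : IsQuenchedLaw ω 0 μ)
    (hhalf : 1 / 2 ≤ μ {X | hit (TbplusZ ω L) X < hit (TbminusZ ω L) X}) :
    ∀ n : ℕ, Real.exp (3 * δ * L) ≤ n →
      ENNReal.ofReal (1 / 2 - 6 * (L : ℝ) ^ 4 * Real.exp (-δ * L)) ≤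
        μ {X | 3 * hit (TbplusZ ω L) X ≤ 2 * (n : ℕ∞) ∧
          hit (TbplusZ ω L) X < hit (TbminusZ ω L) X} :=
  hitting_time_estimate_general δ L ω hω hΓ μ hμ hhalf

end
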